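/- Let f(ρ) = log 2 − (1/2)[ρ log ρ + (1−ρ) log(1−ρ)] and g(ρ) = ((1+ρ)/2) log(1+ρ) − ρ log ρ − (1 − ρ/2) log(2−ρ). For every integer k ≥ 2, the equation f(ρ) + k·g(ρ) = 0 has a unique root ρ(k) in (0,1), and ρ(k) is strictly increasing in k. -/

import Mathlib

noncomputable def fExp (ρ : ℝ) : ℝ :=
  Real.log 2 - (1/2) * (ρ * Real.log ρ + (1-ρ) * Real.log (1-ρ))

noncomputable def gExp (ρ : ℝ) : ℝ :=
  ((1+ρ)/2) * Real.log (1+ρ) - ρ * Real.log ρ - (1-ρ/2) * Real.log (2-ρ)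

/-!
`f` is `log 2` plus half the binary entropy, and `g' ρ = ½ log ((1 + ρ)(2 - ρ)) - log ρ > 0`
on `(0, 1)`, so for `t ≥ 0` the function `f + t g` is strictly increasing on `[0, 1/2]`. For
`t > 1` it goes from `(1 - t) log 2 < 0` at `0` to a positive value at `1/2`, and it stays
positive on `[1/2, 1]` since `g ≥ g (1/2) > 0` there: this gives the unique root. As `f > 0`,
`g` is negative at the root for `s`, so `f + t g` is negative there for every `t > s`, and the
root for `t` lies further right.
-/

open Real Set

lemma fExp_eq_log_two_add_binEntropy (ρ : ℝ) : fExp ρ = log 2 + binEntropy ρ / 2 := by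
  simp only [fExp, binEntropy, log_inv]
  ring

lemma fExp_pos {ρ : ℝ} (h₀ : 0 ≤ ρ) (h₁ : ρ ≤ 1) : 0 < fExp ρ := by
  rw [fExp_eq_log_two_add_binEntropy]
  have := binEntropy_nonneg h₀ h₁
  have := log_pos one_lt_two
  positivity

lemma fExp_strictMonoOn : StrictMonoOn fExp (Icc 0 2⁻¹) := fun x hx y hy hxy => by
  simp only [fExp_eq_log_two_add_binEntropy]
  linarith [binEntropy_strictMonoOn hx hy hxy]

lemma continuous_fExp : Continuous fExp := by
  simp only [funext fExp_eq_log_two_add_binEntropy]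
  fun_prop

lemma fExp_zero : fExp 0 = log 2 := by
  simp [fExp]

lemma gExp_eq_negMulLog (ρ : ℝ) :
    gExp ρ = negMulLog ρ + (negMulLog (2 - ρ) - negMulLog (1 + ρ)) / 2 := by
  simp only [gExp, negMulLog]
  ring

lemma continuous_gExp : Continuous gExp := by
  simp only [funext gExp_eq_negMulLog]
  fun_prop

lemma hasDerivAt_gExp {x : ℝ} (hx₀ : 0 < x) (hx₂ : x < 2) :
    HasDerivAt gExp ((log (1 + x) + log (2 - x)) / 2 - log x) x := by
  have h₁ := (hasDerivAt_negMulLog (by linarith : 1 + x ≠ 0)).comp_const_add 1 x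
  have h₂ := (hasDerivAt_negMulLog (by linarith : 2 - x ≠ 0)).comp_const_sub 2 x
  rw [funext gExp_eq_negMulLog]
  exact ((hasDerivAt_negMulLog hx₀.ne').add ((h₂.sub h₁).div_const 2)).congr_deriv (by ring)

lemma log_lt_half_log_add_log {x : ℝ} (h₀ : 0 < x) (h₁ : x < 1) :
    log x < (log (1 + x) + log (2 - x)) / 2 := by
  have hsq : x * x < (1 + x) * (2 - x) := by nlinarith
  have := log_lt_log (by positivity) hsq
  rw [log_mul h₀.ne' h₀.ne', log_mul (by linarith) (by linarith)] at this
  linarith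

lemma gExp_strictMonoOn : StrictMonoOn gExp (Icc 0 1) := by
  refine strictMonoOn_of_deriv_pos (convex_Icc 0 1) continuous_gExp.continuousOn fun x hx => ?_
  rw [interior_Icc] at hx
  rw [(hasDerivAt_gExp hx.1 (by linarith [hx.2])).deriv]
  linarith [log_lt_half_log_add_log hx.1 hx.2]

lemma gExp_zero : gExp 0 = -log 2 := by
  simp [gExp]

lemma gExp_two_inv : gExp 2⁻¹ = log 2 / 2 := by
  have h : (1 : ℝ) + 2⁻¹ = 2 - 2⁻¹ := by norm_num
  simp only [gExp, h, log_inv]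
  ring

section Threshold

variable {t : ℝ}

lemma strictMonoOn_fExp_add_mul_gExp (ht : 0 ≤ t) :
    StrictMonoOn (fun ρ => fExp ρ + t * gExp ρ) (Icc 0 2⁻¹) :=
  fExp_strictMonoOn.add_monotone fun x hx y hy hxy =>
    mul_le_mul_of_nonneg_left (gExp_strictMonoOn.monotoneOn
      ⟨hx.1, hx.2.trans (by norm_num)⟩ ⟨hy.1, hy.2.trans (by norm_num)⟩ hxy) ht

lemma fExp_add_mul_gExp_pos_of_two_inv_le (ht : 0 ≤ t) {ρ : ℝ} (h₀ : 2⁻¹ ≤ ρ) (h₁ : ρ ≤ 1) :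
    0 < fExp ρ + t * gExp ρ := by
  have hg : log 2 / 2 ≤ gExp ρ := gExp_two_inv ▸
    gExp_strictMonoOn.monotoneOn ⟨by norm_num, by norm_num⟩ ⟨by linarith, h₁⟩ h₀
  have := log_pos one_lt_two
  have := fExp_pos (by linarith) h₁
  nlinarith

lemma lt_two_inv_of_fExp_add_mul_gExp_eq_zero (ht : 0 ≤ t) {ρ : ℝ} (h₁ : ρ ≤ 1)
    (hρ : fExp ρ + t * gExp ρ = 0) : ρ < 2⁻¹ := by
  by_contra! h
  exact (fExp_add_mul_gExp_pos_of_two_inv_le ht h h₁).ne' hρ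

lemma exists_fExp_add_mul_gExp_eq_zero (ht : 1 < t) :
    ∃ ρ ∈ Ioo 0 2⁻¹, fExp ρ + t * gExp ρ = 0 := by
  have hcont : ContinuousOn (fun ρ => fExp ρ + t * gExp ρ) (Icc 0 2⁻¹) :=
    (continuous_fExp.add (continuous_gExp.const_mul t)).continuousOn
  have hlog := log_pos one_lt_two
  have hneg : fExp 0 + t * gExp 0 < 0 := by
    rw [fExp_zero, gExp_zero]
    nlinarith
  have hpos : 0 < fExp 2⁻¹ + t * gExp 2⁻¹ := by
    rw [gExp_two_inv]
    have := fExp_pos (ρ := 2⁻¹) (by norm_num) (by norm_num)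
    positivity
  exact intermediate_value_Ioo (by norm_num) hcont ⟨hneg, hpos⟩

lemma eq_of_fExp_add_mul_gExp_eq_zero (ht : 0 ≤ t) {ρ σ : ℝ} (hρ : ρ ∈ Ioo 0 1)
    (hσ : σ ∈ Ioo 0 1) (hρt : fExp ρ + t * gExp ρ = 0) (hσt : fExp σ + t * gExp σ = 0) :
    ρ = σ :=
  (strictMonoOn_fExp_add_mul_gExp ht).injOn
    ⟨hρ.1.le, (lt_two_inv_of_fExp_add_mul_gExp_eq_zero ht hρ.2.le hρt).le⟩
    ⟨hσ.1.le, (lt_two_inv_of_fExp_add_mul_gExp_eq_zero ht hσ.2.le hσt).le⟩ (hρt.trans hσt.symm)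

lemma existsUnique_fExp_add_mul_gExp_eq_zero (ht : 1 < t) :
    ∃! ρ, ρ ∈ Ioo 0 1 ∧ fExp ρ + t * gExp ρ = 0 := by
  obtain ⟨ρ, hρ, hρt⟩ := exists_fExp_add_mul_gExp_eq_zero ht
  exact ⟨ρ, ⟨⟨hρ.1, hρ.2.trans (by norm_num)⟩, hρt⟩,
    fun σ ⟨hσ, hσt⟩ => eq_of_fExp_add_mul_gExp_eq_zero (by linarith) hσ
      ⟨hρ.1, hρ.2.trans (by norm_num)⟩ hσt hρt⟩

lemma lt_of_fExp_add_mul_gExp_eq_zero {s : ℝ} (hs : 0 ≤ s) (hst : s < t) {ρ σ : ℝ}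
    (hρ : ρ ∈ Ioo 0 1) (hσ : σ ∈ Ioo 0 1) (hρs : fExp ρ + s * gExp ρ = 0)
    (hσt : fExp σ + t * gExp σ = 0) : ρ < σ := by
  have ht : 0 ≤ t := hs.trans hst.le
  have hg : gExp ρ < 0 := by
    have := fExp_pos hρ.1.le hρ.2.le
    nlinarith
  have hlt : fExp ρ + t * gExp ρ < fExp σ + t * gExp σ := by nlinarith
  exact (strictMonoOn_fExp_add_mul_gExp ht).lt_iff_lt
    ⟨hρ.1.le, (lt_two_inv_of_fExp_add_mul_gExp_eq_zero hs hρ.2.le hρs).le⟩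
    ⟨hσ.1.le, (lt_two_inv_of_fExp_add_mul_gExp_eq_zero ht hσ.2.le hσt).le⟩ |>.mp hlt

end Threshold

noncomputable def expansionThreshold (t : ℝ) : ℝ :=
  Classical.epsilon fun ρ => ρ ∈ Ioo 0 1 ∧ fExp ρ + t * gExp ρ = 0

lemma expansionThreshold_spec {t : ℝ} (ht : 1 < t) :
    expansionThreshold t ∈ Ioo 0 1 ∧
      fExp (expansionThreshold t) + t * gExp (expansionThreshold t) = 0 :=
  Classical.epsilon_spec (existsUnique_fExp_add_mul_gExp_eq_zero ht).exists

theorem stmt_8 :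
    ∃ ρfun : ℕ → ℝ,
      (∀ k : ℕ, 2 ≤ k →
        ρfun k ∈ Set.Ioo (0:ℝ) 1 ∧
        fExp (ρfun k) + k * gExp (ρfun k) = 0 ∧
        (∀ ρ ∈ Set.Ioo (0:ℝ) 1, fExp ρ + k * gExp ρ = 0 → ρ = ρfun k)) ∧
      (∀ k : ℕ, 2 ≤ k → ρfun k < ρfun (k+1)) := by
  have one_lt_cast {k : ℕ} (hk : 2 ≤ k) : (1 : ℝ) < k := by exact_mod_cast hk
  refine ⟨fun k => expansionThreshold k, fun k hk => ?_, fun k hk => ?_⟩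
  · obtain ⟨hmem, hroot⟩ := expansionThreshold_spec (one_lt_cast hk)
    exact ⟨hmem, hroot, fun ρ hρ hρk =>
      (existsUnique_fExp_add_mul_gExp_eq_zero (one_lt_cast hk)).unique ⟨hρ, hρk⟩ ⟨hmem, hroot⟩⟩
  · obtain ⟨hmem, hroot⟩ := expansionThreshold_spec (one_lt_cast hk)
    obtain ⟨hmem', hroot'⟩ := expansionThreshold_spec (one_lt_cast (k.le_succ.trans' hk))
    exact lt_of_fExp_add_mul_gExp_eq_zero k.cast_nonneg (by push_cast; linarith) hmem hmem'
      hroot hroot'
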